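/- The function φ_α := Σ_{n≥1} (t_n/a_n)·𝟙_{A_n} is a fixed point of the Ruelle (transfer) operator of the α-Farey map; that is, the measure ν_α with density φ_α with respect to Lebesgue measure is F_α-invariant: ν_α(F_α^{-1}(B)) = ν_α(B) for every Borel set B. -/

import Mathlib

/-!
On `A_n` the density `φ_α` is the constant `t_n / a_n`, and `F_α` maps `A_1` affinely onto
`[0, 1)` with slope `-1 / a_1` and `A_{n+1}` affinely onto `A_n` with slope `a_n / a_{n+1}`.
So a point of `A_n` has one preimage in `A_1`, contributing `(t_1 / a_1) · a_1 = 1` to the transfer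
operator, and one in `A_{n+1}`, contributing `(t_{n+1} / a_{n+1}) · (a_{n+1} / a_n)`; since
`t_n = a_n + t_{n+1}` these add up to `t_n / a_n`. Integrating this identity over `B ∩ A_n` and
summing over `n` gives `ν_α(F_α⁻¹ B) = ν_α(B)`.
-/

open MeasureTheory Set Filter Topology
open scoped ENNReal Function

theorem tsum_nat_add_eq_add_tsum_succ {G : Type*} [AddCommGroup G] [TopologicalSpace G]
    [IsTopologicalAddGroup G] [T2Space G] {f : ℕ → G} (hf : Summable f) (n : ℕ) :
    ∑' k, f (n + k) = f n + ∑' k, f (n + 1 + k) := by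
  have hfn : Summable fun k => f (n + k) := by
    simpa only [add_comm] using (summable_nat_add_iff n).2 hf
  rw [hfn.tsum_eq_zero_add]
  simp only [add_zero, add_assoc, add_comm 1]

theorem Antitone.iUnion_Ioc_succ_eq_Ioc {β : Type*} [LinearOrder β] [TopologicalSpace β]
    [OrderClosedTopology β] {s : ℕ → β} {l : β} (hs : Antitone s) (hlim : Tendsto s atTop (𝓝 l)) :
    ⋃ n, Ioc (s (n + 1)) (s n) = Ioc l (s 0) := by
  classical
  refine Subset.antisymm
    (iUnion_subset fun n => Ioc_subset_Ioc (hs.le_of_tendsto hlim _) (hs n.zero_le)) ?_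
  rintro x ⟨hlx, hxs⟩
  have hex : ∃ n, s n < x := (hlim.eventually_lt_const hlx).exists
  obtain ⟨k, hk⟩ : ∃ k, Nat.find hex = k + 1 :=
    Nat.exists_eq_succ_of_ne_zero fun h => (h ▸ Nat.find_spec hex).not_ge hxs
  exact mem_iUnion.2
    ⟨k, hk ▸ Nat.find_spec hex, not_lt.1 (Nat.find_min hex (hk ▸ k.lt_succ_self))⟩

theorem setLIntegral_eq_tsum_of_eqOn_const {α : Type*} [MeasurableSpace α] {μ : Measure α}
    {A : ℕ → Set α} {S : Set α} {f : α → ℝ≥0∞} {c : ℕ → ℝ≥0∞}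
    (hA : Pairwise (Disjoint on A)) (hAS : ∀ n, MeasurableSet (A n ∩ S))
    (hS : μ (S \ ⋃ n, A n) = 0) (hf : ∀ n, EqOn f (fun _ => c n) (A n)) :
    ∫⁻ x in S, f x ∂μ = ∑' n, c n * μ (A n ∩ S) := by
  have hS' : S =ᵐ[μ] ⋃ n, A n ∩ S := by
    rw [← iUnion_inter, inter_comm, ae_eq_set, sdiff_self_inter,
      sdiff_eq_empty.2 inter_subset_left]
    exact ⟨hS, measure_empty⟩
  rw [Measure.restrict_congr_set hS',
    lintegral_iUnion hAS (hA.mono fun _ _ h => h.mono inter_subset_left inter_subset_left)]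
  refine tsum_congr fun n => ?_
  rw [setLIntegral_congr_fun (hAS n) fun x hx => hf n hx.1, setLIntegral_const]

/-- `hfix` says that the step function `φ` is fixed by the transfer operator of a map with one
full branch of inverse slope `r₀` and, for each `n`, a branch from piece `n + 1` onto piece `n`
of inverse slope `r n`. -/
theorem tsum_ofReal_mul_eq_of_transfer_fixed_point {φ r : ℕ → ℝ} {r₀ : ℝ} {v : ℕ → ℝ≥0∞}
    (hφ : ∀ n, 0 ≤ φ n) (hr : ∀ n, 0 ≤ r n) (hr₀ : 0 ≤ r₀)
    (hfix : ∀ n, φ n = φ 0 * r₀ + φ (n + 1) * r n) :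
    ENNReal.ofReal (φ 0) * (ENNReal.ofReal r₀ * ∑' n, v n) +
        ∑' n, ENNReal.ofReal (φ (n + 1)) * (ENNReal.ofReal (r n) * v n) =
      ∑' n, ENNReal.ofReal (φ n) * v n := by
  rw [← mul_assoc, ← ENNReal.ofReal_mul (hφ 0), ← ENNReal.tsum_mul_left, ← ENNReal.tsum_add]
  refine tsum_congr fun n => ?_
  rw [← mul_assoc, ← ENNReal.ofReal_mul (hφ _), ← add_mul,
    ← ENNReal.ofReal_add (mul_nonneg (hφ 0) hr₀) (mul_nonneg (hφ _) (hr n)), ← hfix]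

theorem Real.volume_preimage_mul_add {c : ℝ} (hc : c ≠ 0) (d : ℝ) (s : Set ℝ) :
    volume ((fun x => c * x + d) ⁻¹' s) = ENNReal.ofReal |c⁻¹| * volume s := by
  change volume ((c * ·) ⁻¹' ((· + d) ⁻¹' s)) = _
  rw [Real.volume_preimage_mul_left hc, measure_preimage_add_right]

section AffinePreimage

variable {K : Type*} [Field K] [LinearOrder K] [IsStrictOrderedRing K] {c : K}

theorem preimage_affine_Ioc_of_pos (hc : 0 < c) (d p q : K) :
    (fun x => c * x + d) ⁻¹' Ioc (c * p + d) (c * q + d) = Ioc p q := by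
  ext x
  simp only [mem_preimage, mem_Ioc, add_lt_add_iff_right, add_le_add_iff_right,
    mul_lt_mul_iff_right₀ hc, mul_le_mul_iff_right₀ hc]

theorem preimage_affine_Ico_of_neg (hc : c < 0) (d p q : K) :
    (fun x => c * x + d) ⁻¹' Ico (c * q + d) (c * p + d) = Ioc p q := by
  ext x
  simp only [mem_preimage, mem_Ico, mem_Ioc, add_lt_add_iff_right, add_le_add_iff_right,
    mul_lt_mul_left_of_neg hc, mul_le_mul_left_of_neg hc, and_comm]

end AffinePreimage

def IsAffineBranch (F : ℝ → ℝ) (I J : Set ℝ) (r : ℝ) : Prop :=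
  ∃ c d : ℝ, c ≠ 0 ∧ |c⁻¹| = r ∧ EqOn F (fun x => c * x + d) I ∧
    (fun x => c * x + d) ⁻¹' J = I

namespace IsAffineBranch

variable {F : ℝ → ℝ} {I J : Set ℝ} {r : ℝ}

theorem inter_preimage_eq (h : IsAffineBranch F I J r) (B : Set ℝ) :
    ∃ c d : ℝ, c ≠ 0 ∧ |c⁻¹| = r ∧ I ∩ F ⁻¹' B = (fun x => c * x + d) ⁻¹' (J ∩ B) := by
  obtain ⟨c, d, hc, hr, hF, hJ⟩ := h
  exact ⟨c, d, hc, hr, by rw [hF.inter_preimage_eq, preimage_inter, hJ]⟩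

theorem measurableSet_inter_preimage (h : IsAffineBranch F I J r) (hJ : MeasurableSet J)
    {B : Set ℝ} (hB : MeasurableSet B) : MeasurableSet (I ∩ F ⁻¹' B) := by
  obtain ⟨c, d, -, -, hIB⟩ := h.inter_preimage_eq B
  rw [hIB]
  exact (hJ.inter hB).preimage (by fun_prop)

theorem volume_inter_preimage (h : IsAffineBranch F I J r) (B : Set ℝ) :
    volume (I ∩ F ⁻¹' B) = ENNReal.ofReal r * volume (J ∩ B) := by
  obtain ⟨c, d, hc, hr, hIB⟩ := h.inter_preimage_eq B
  rw [hIB, Real.volume_preimage_mul_add hc, hr]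

end IsAffineBranch

/-- The interval `A_{n+1} = (t_{n+2}, t_{n+1}]`; shifting the index lets sums over the partition
run over all of `ℕ`. -/
def tailInterval (t : ℕ → ℝ) (n : ℕ) : Set ℝ := Ioc (t (n + 2)) (t (n + 1))

section AlphaFarey

variable {a t : ℕ → ℝ} {F : ℝ → ℝ}

theorem tail_eq_add_tail_succ (ha : Summable a) (ht : ∀ n, t n = ∑' k, a (n + k)) (n : ℕ) :
    t n = a n + t (n + 1) := by
  rw [ht, ht, tsum_nat_add_eq_add_tsum_succ ha]

theorem tail_succ_nonneg (hpos : ∀ n ≥ 1, 0 < a n) (ht : ∀ n, t n = ∑' k, a (n + k)) (n : ℕ) :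
    0 ≤ t (n + 1) := by
  rw [ht]
  exact tsum_nonneg fun k => (hpos _ (by omega)).le

theorem antitone_tail_succ (hpos : ∀ n ≥ 1, 0 < a n) (hrec : ∀ n, t n = a n + t (n + 1)) :
    Antitone fun n => t (n + 1) :=
  antitone_nat_of_succ_le fun n => by linarith [hrec (n + 1), hpos (n + 1) n.succ_pos]

theorem pairwise_disjoint_tailInterval (hpos : ∀ n ≥ 1, 0 < a n)
    (hrec : ∀ n, t n = a n + t (n + 1)) : Pairwise (Disjoint on tailInterval t) :=
  (antitone_tail_succ hpos hrec).pairwise_disjoint_on_Ioc_succ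

theorem iUnion_tailInterval (hpos : ∀ n ≥ 1, 0 < a n) (ha : Summable a)
    (ht : ∀ n, t n = ∑' k, a (n + k)) : ⋃ n, tailInterval t n = Ioc 0 (t 1) := by
  have hlim : Tendsto t atTop (𝓝 0) := by
    rw [funext ht]
    simpa only [add_comm] using tendsto_sum_nat_add a
  exact (antitone_tail_succ hpos (tail_eq_add_tail_succ ha ht)).iUnion_Ioc_succ_eq_Ioc
    (hlim.comp (tendsto_add_atTop_nat 1))

theorem setLIntegral_Icc_inter_eq_tsum_tailInterval (hpos : ∀ n ≥ 1, 0 < a n)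
    (ha : Summable a) (ht : ∀ n, t n = ∑' k, a (n + k)) (ht1 : t 1 = 1)
    {f : ℝ → ℝ≥0∞} {c : ℕ → ℝ≥0∞} (hf : ∀ n, EqOn f (fun _ => c n) (tailInterval t n))
    {S : Set ℝ} (hS : ∀ n, MeasurableSet (tailInterval t n ∩ S)) :
    ∫⁻ x in Icc 0 1 ∩ S, f x = ∑' n, c n * volume (tailInterval t n ∩ S) := by
  have hunion := iUnion_tailInterval hpos ha ht
  rw [ht1] at hunion
  have hpiece (n : ℕ) : tailInterval t n ∩ (Icc 0 1 ∩ S) = tailInterval t n ∩ S := by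
    rw [← inter_assoc,
      inter_eq_left.2 ((subset_iUnion _ n).trans (hunion ▸ Ioc_subset_Icc_self))]
  have hnull : volume ((Icc 0 1 ∩ S) \ ⋃ n, tailInterval t n) = 0 := by
    rw [hunion]
    exact measure_mono_null (sdiff_subset_sdiff_left inter_subset_left)
      (ae_eq_set.1 Ioc_ae_eq_Icc).2
  simp only [← hpiece] at hS ⊢
  exact setLIntegral_eq_tsum_of_eqOn_const
    (pairwise_disjoint_tailInterval hpos (tail_eq_add_tail_succ ha ht)) hS hnull hf

theorem volume_Icc_inter_eq_tsum_tailInterval (hpos : ∀ n ≥ 1, 0 < a n) (ha : Summable a)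
    (ht : ∀ n, t n = ∑' k, a (n + k)) (ht1 : t 1 = 1) {S : Set ℝ} (hS : MeasurableSet S) :
    volume (Icc 0 1 ∩ S) = ∑' n, volume (tailInterval t n ∩ S) := by
  simpa using setLIntegral_Icc_inter_eq_tsum_tailInterval hpos ha ht ht1 (f := 1) (c := 1)
    (fun _ => eqOn_refl _ _) (fun _ => measurableSet_Ioc.inter hS)

theorem isAffineBranch_tailInterval_zero (ha : 0 < a 1) (ht1 : t 1 = 1)
    (hrec : t 1 = a 1 + t 2) (hF : ∀ x ∈ Ioc (t 2) (t 1), F x = (1 - x) / a 1) :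
    IsAffineBranch F (tailInterval t 0) (Ico 0 1) (a 1) := by
  have hc : -(a 1)⁻¹ < 0 := neg_neg_of_pos (inv_pos.2 ha)
  refine ⟨-(a 1)⁻¹, (a 1)⁻¹, hc.ne, by rw [inv_neg, inv_inv, abs_neg, abs_of_pos ha],
    fun x hx => by rw [hF x hx]; ring, ?_⟩
  have h0 : -(a 1)⁻¹ * t 1 + (a 1)⁻¹ = 0 := by rw [ht1]; ring
  have h1 : -(a 1)⁻¹ * t 2 + (a 1)⁻¹ = 1 := by
    rw [show t 2 = 1 - a 1 by linarith]; field_simp; ring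
  simpa only [tailInterval, h0, h1] using preimage_affine_Ico_of_neg hc (a 1)⁻¹ (t 2) (t 1)

theorem isAffineBranch_tailInterval_succ {n : ℕ} (ha : 0 < a (n + 1)) (ha' : 0 < a (n + 2))
    (hrec : t (n + 1) = a (n + 1) + t (n + 2)) (hrec' : t (n + 2) = a (n + 2) + t (n + 3))
    (hF : ∀ x ∈ Ioc (t (n + 3)) (t (n + 2)),
      F x = a (n + 1) * (x - t (n + 3)) / a (n + 2) + t (n + 2)) :
    IsAffineBranch F (tailInterval t (n + 1)) (tailInterval t n) (a (n + 2) / a (n + 1)) := by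
  have hc : 0 < a (n + 1) / a (n + 2) := div_pos ha ha'
  set d := t (n + 2) - a (n + 1) / a (n + 2) * t (n + 3)
  refine ⟨a (n + 1) / a (n + 2), d, hc.ne', by rw [inv_div, abs_of_pos (div_pos ha' ha)],
    fun x hx => by rw [hF x hx]; ring, ?_⟩
  have h3 : a (n + 1) / a (n + 2) * t (n + 3) + d = t (n + 2) := by ring
  have h2 : a (n + 1) / a (n + 2) * t (n + 2) + d = t (n + 1) := by
    linear_combination
      h3 + a (n + 1) / a (n + 2) * hrec' + div_mul_cancel₀ (a (n + 1)) ha'.ne' - hrec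
  simpa only [tailInterval, h2, h3] using preimage_affine_Ioc_of_pos hc d (t (n + 3)) (t (n + 2))

theorem tail_div_eq_transfer (hpos : ∀ n ≥ 1, 0 < a n) (hrec : ∀ n, t n = a n + t (n + 1))
    (ht1 : t 1 = 1) (n : ℕ) :
    t (n + 1) / a (n + 1) =
      t 1 / a 1 * a 1 + t (n + 2) / a (n + 2) * (a (n + 2) / a (n + 1)) := by
  have h1 := hpos 1 le_rfl
  have hn1 := hpos (n + 1) n.succ_pos
  have hn2 := hpos (n + 2) (by omega)
  field_simp
  linear_combination hrec (n + 1) - a (n + 1) * ht1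

end AlphaFarey

theorem stmt6_general (a t : ℕ → ℝ) (F φ : ℝ → ℝ)
    (hpos : ∀ n ≥ 1, 0 < a n)
    (hsummable : Summable (fun n => a (n + 1)))
    (hsum : ∑' n, a (n + 1) = 1)
    (ht : ∀ n, t n = ∑' k, a (n + k))
    (hF1 : ∀ x ∈ Set.Ioc (t 2) (t 1), F x = (1 - x) / a 1)
    (hFn : ∀ n ≥ 2, ∀ x ∈ Set.Ioc (t (n + 1)) (t n),
      F x = a (n - 1) * (x - t (n + 1)) / a n + t n)
    (hφ : ∀ n ≥ 1, ∀ x ∈ Set.Ioc (t (n + 1)) (t n), φ x = t n / a n) :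
    ∀ B : Set ℝ, MeasurableSet B → B ⊆ Set.Icc 0 1 →
      ∫⁻ x in Set.Icc (0 : ℝ) 1 ∩ F ⁻¹' B, ENNReal.ofReal (φ x) =
      ∫⁻ x in B, ENNReal.ofReal (φ x) := by
  intro B hB hBsub
  have ha : Summable a := (summable_nat_add_iff 1).1 hsummable
  have hrec := tail_eq_add_tail_succ ha ht
  have ht1 : t 1 = 1 := by rw [ht, ← hsum]; simp only [add_comm]
  have hzero : IsAffineBranch F (tailInterval t 0) (Ico 0 1) (a 1) :=
    isAffineBranch_tailInterval_zero (hpos 1 le_rfl) ht1 (hrec 1) hF1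
  have hsucc (k : ℕ) :
      IsAffineBranch F (tailInterval t (k + 1)) (tailInterval t k) (a (k + 2) / a (k + 1)) :=
    isAffineBranch_tailInterval_succ (hpos _ k.succ_pos) (hpos _ (by omega)) (hrec _) (hrec _)
      (hFn (k + 2) (by omega))
  have hmeas : ∀ n, MeasurableSet (tailInterval t n ∩ F ⁻¹' B) := by
    rintro (_ | k)
    · exact hzero.measurableSet_inter_preimage measurableSet_Ico hB
    · exact (hsucc k).measurableSet_inter_preimage measurableSet_Ioc hB
  have hdensity (n : ℕ) : EqOn (fun x => ENNReal.ofReal (φ x))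
      (fun _ => ENNReal.ofReal (t (n + 1) / a (n + 1))) (tailInterval t n) := fun x hx =>
    congrArg ENNReal.ofReal (hφ (n + 1) n.succ_pos x hx)
  conv_rhs => rw [← inter_eq_right.2 hBsub]
  rw [setLIntegral_Icc_inter_eq_tsum_tailInterval hpos ha ht ht1 hdensity hmeas,
    setLIntegral_Icc_inter_eq_tsum_tailInterval hpos ha ht ht1 hdensity
      (fun _ => measurableSet_Ioc.inter hB),
    tsum_eq_zero_add' ENNReal.summable, hzero.volume_inter_preimage,
    measure_congr (Ico_ae_eq_Icc.inter (ae_eq_refl B)),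
    volume_Icc_inter_eq_tsum_tailInterval hpos ha ht ht1 hB]
  simp only [(hsucc _).volume_inter_preimage]
  exact tsum_ofReal_mul_eq_of_transfer_fixed_point
    (fun n => div_nonneg (tail_succ_nonneg hpos ht n) (hpos _ n.succ_pos).le)
    (fun n => div_nonneg (hpos _ (by omega)).le (hpos _ n.succ_pos).le) (hpos 1 le_rfl).le
    (tail_div_eq_transfer hpos hrec ht1)

/-- The density `φ_α = Σ (t_n/a_n)·𝟙_{A_n}` yields an invariant measure for the α-Farey map:
`ν_α(F_α⁻¹ B) = ν_α(B)` for every Borel `B ⊆ [0,1]`. -/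
theorem stmt6 (a t : ℕ → ℝ) (F φ : ℝ → ℝ)
    (hpos : ∀ n ≥ 1, 0 < a n)
    (hsummable : Summable (fun n => a (n + 1)))
    (hsum : ∑' n, a (n + 1) = 1)
    (ht : ∀ n, t n = ∑' k, a (n + k))
    (hF0 : F 0 = 0)
    (hF1 : ∀ x ∈ Set.Ioc (t 2) (t 1), F x = (1 - x) / a 1)
    (hFn : ∀ n ≥ 2, ∀ x ∈ Set.Ioc (t (n + 1)) (t n),
      F x = a (n - 1) * (x - t (n + 1)) / a n + t n)
    (hφ : ∀ n ≥ 1, ∀ x ∈ Set.Ioc (t (n + 1)) (t n), φ x = t n / a n) :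
    ∀ B : Set ℝ, MeasurableSet B → B ⊆ Set.Icc 0 1 →
      ∫⁻ x in Set.Icc (0 : ℝ) 1 ∩ F ⁻¹' B, ENNReal.ofReal (φ x) =
      ∫⁻ x in B, ENNReal.ofReal (φ x) :=
  stmt6_general a t F φ hpos hsummable hsum ht hF1 hFn hφ
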